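/- For u, v ∈ H^{1/2}(𝕋) ∩ H¹(𝕋) one has |∫₀^{2π} ( Im(ū' u) − Im(v̄' v) ) dx| ≤ C (‖u‖_{H^{1/2}} + ‖v‖_{H^{1/2}}) ‖u − v‖_{H^{1/2}}, where the H^{1/2} norm is defined via Fourier coefficients by ‖f‖²_{H^{1/2}} = Σ_{ξ∈ℤ} ⟨ξ⟩ |f̂(ξ)|². -/

import Mathlib

/-!
Since the Fourier coefficients of `u'` are `i ξ û(ξ)`, Parseval's identity turns the momentum
`(2π)⁻¹ ∫ Im(ū' u)` into `-∑ ξ |û(ξ)|²`. Termwise,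
`|ξ| · ||û|² - |v̂|²| ≤ ⟨ξ⟩ |û - v̂| (|û| + |v̂|)`, and Cauchy–Schwarz in `ℓ²` with weight `⟨ξ⟩`
bounds the sum by `(‖u‖_{H^{1/2}} + ‖v‖_{H^{1/2}}) ‖u - v‖_{H^{1/2}}`; hence `C = 2π`.
-/

open Real MeasureTheory intervalIntegral Complex

noncomputable def fCoeff (f : ℝ → ℂ) (ξ : ℤ) : ℂ :=
  (1 / (2 * π)) * ∫ x in (0:ℝ)..(2 * π), f x * Complex.exp (-Complex.I * ξ * x)

noncomputable def HhalfSq (f : ℝ → ℂ) : ℝ :=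
  ∑' ξ : ℤ, Real.sqrt (1 + (ξ : ℝ) ^ 2) * ‖fCoeff f ξ‖ ^ 2

open ComplexConjugate

section WeightedSequences

variable {ι : Type*}

theorem summable_and_tsum_mul_mul_le_sqrt {w x y : ι → ℝ} (hw : ∀ i, 0 ≤ w i) (hx : ∀ i, 0 ≤ x i)
    (hy : ∀ i, 0 ≤ y i) (hx2 : Summable fun i => w i * x i ^ 2)
    (hy2 : Summable fun i => w i * y i ^ 2) :
    (Summable fun i => w i * x i * y i) ∧
      ∑' i, w i * x i * y i ≤ √(∑' i, w i * x i ^ 2) * √(∑' i, w i * y i ^ 2) := by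
  have hsq : ∀ z : ι → ℝ, ∀ i, (√(w i) * z i) ^ (2 : ℝ) = w i * z i ^ 2 := fun z i => by
    rw [Real.rpow_two, mul_pow, Real.sq_sqrt (hw i)]
  have hmul : ∀ i, √(w i) * x i * (√(w i) * y i) = w i * x i * y i := fun i => by
    rw [mul_mul_mul_comm, Real.mul_self_sqrt (hw i), mul_assoc]
  have H := Real.summable_and_inner_le_Lp_mul_Lq_tsum_of_nonneg (f := fun i => √(w i) * x i)
    (g := fun i => √(w i) * y i) Real.HolderConjugate.two_two
    (fun i => mul_nonneg (sqrt_nonneg _) (hx i)) (fun i => mul_nonneg (sqrt_nonneg _) (hy i))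
    (by simpa only [hsq] using hx2) (by simpa only [hsq] using hy2)
  simpa only [hmul, hsq, ← Real.sqrt_eq_rpow] using H

theorem abs_le_of_hasSum_mul_sub_sq_norm {E : Type*} [SeminormedAddCommGroup E] {m w : ι → ℝ}
    (hmw : ∀ i, |m i| ≤ w i) {a b : ι → E} (ha : Summable fun i => w i * ‖a i‖ ^ 2)
    (hb : Summable fun i => w i * ‖b i‖ ^ 2) {S : ℝ}
    (hS : HasSum (fun i => m i * (‖a i‖ ^ 2 - ‖b i‖ ^ 2)) S) :
    |S| ≤ (√(∑' i, w i * ‖a i‖ ^ 2) + √(∑' i, w i * ‖b i‖ ^ 2))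
      * √(∑' i, w i * ‖a i - b i‖ ^ 2) := by
  have hw : ∀ i, 0 ≤ w i := fun i => (abs_nonneg _).trans (hmw i)
  have hsub : Summable fun i => w i * ‖a i - b i‖ ^ 2 := by
    refine .of_nonneg_of_le (fun i => mul_nonneg (hw i) (sq_nonneg _)) (fun i => ?_)
      ((ha.add hb).mul_left 2)
    calc w i * ‖a i - b i‖ ^ 2 ≤ w i * (2 * (‖a i‖ ^ 2 + ‖b i‖ ^ 2)) :=
          mul_le_mul_of_nonneg_left
            ((pow_le_pow_left₀ (norm_nonneg _) (norm_sub_le _ _) 2).trans add_sq_le) (hw i)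
      _ = 2 * (w i * ‖a i‖ ^ 2 + w i * ‖b i‖ ^ 2) := by ring
  obtain ⟨hsa, hCSa⟩ := summable_and_tsum_mul_mul_le_sqrt hw (fun i => norm_nonneg (a i))
    (fun i => norm_nonneg (a i - b i)) ha hsub
  obtain ⟨hsb, hCSb⟩ := summable_and_tsum_mul_mul_le_sqrt hw (fun i => norm_nonneg (b i))
    (fun i => norm_nonneg (a i - b i)) hb hsub
  have hterm : ∀ i, ‖m i * (‖a i‖ ^ 2 - ‖b i‖ ^ 2)‖
      ≤ w i * ‖a i‖ * ‖a i - b i‖ + w i * ‖b i‖ * ‖a i - b i‖ := fun i => by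
    have hpq : 0 ≤ ‖a i‖ + ‖b i‖ := by positivity
    rw [Real.norm_eq_abs, abs_mul, sq_sub_sq, abs_mul, abs_of_nonneg hpq]
    calc |m i| * ((‖a i‖ + ‖b i‖) * |‖a i‖ - ‖b i‖|)
        ≤ w i * ((‖a i‖ + ‖b i‖) * ‖a i - b i‖) :=
          mul_le_mul (hmw i) (mul_le_mul_of_nonneg_left (abs_norm_sub_norm_le _ _) hpq)
            (by positivity) (hw i)
      _ = _ := by ring
  calc |S| ≤ ∑' i, w i * ‖a i‖ * ‖a i - b i‖ + ∑' i, w i * ‖b i‖ * ‖a i - b i‖ :=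
        hS.norm_le_of_bounded (hsa.hasSum.add hsb.hasSum) hterm
    _ ≤ _ := by rw [add_mul]; exact add_le_add hCSa hCSb

end WeightedSequences

open AddCircle in
theorem hasSum_conj_fourierCoeffOn_mul_fourierCoeffOn {a b : ℝ} {f g : ℝ → ℂ} (hab : a < b)
    (hf : MemLp f 2 (volume.restrict (Set.Ioc a b)))
    (hg : MemLp g 2 (volume.restrict (Set.Ioc a b))) :
    HasSum (fun i => conj (fourierCoeffOn hab f i) * fourierCoeffOn hab g i)
      ((b - a)⁻¹ • ∫ x in a..b, conj (f x) * g x) := by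
  have := Fact.mk (by linarith : 0 < b - a)
  rw [← add_sub_cancel a b] at hf hg
  have hF := hf.memLp_liftIoc.haarAddCircle
  have hG := hg.memLp_liftIoc.haarAddCircle
  have hcoeff : ∀ i, inner ℂ hF.toLp (fourierBasis i) * inner ℂ (fourierBasis i) hG.toLp
      = conj (fourierCoeffOn hab f i) * fourierCoeffOn hab g i := fun i => by
    rw [← inner_conj_symm, ← fourierBasis.repr_apply_apply, ← fourierBasis.repr_apply_apply,
      fourierBasis_repr, fourierBasis_repr, fourierCoeff_congr_ae hF.coeFn_toLp,
      fourierCoeff_congr_ae hG.coeFn_toLp, fourierCoeff_liftIoc_eq, fourierCoeff_liftIoc_eq]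
    simp only [add_sub_cancel]
  have hinner : inner ℂ hF.toLp hG.toLp = (b - a)⁻¹ • ∫ x in a..b, conj (f x) * g x := by
    have hb : ∫ x in a..b, conj (f x) * g x = ∫ x in a..a + (b - a), conj (f x) * g x := by
      rw [add_sub_cancel]
    rw [hb, L2.inner_def, ← AddCircle.integral_liftIoc_eq_intervalIntegral,
      ← AddCircle.integral_haarAddCircle]
    apply MeasureTheory.integral_congr_ae
    filter_upwards [hF.coeFn_toLp, hG.coeFn_toLp] with x hfx hgx
    rw [RCLike.inner_apply, hfx, hgx]
    exact mul_comm _ _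
  simpa only [hcoeff, hinner] using fourierBasis.hasSum_inner_mul_inner hF.toLp hG.toLp

theorem Continuous.memLp_restrict_Ioc {E : Type*} [NormedAddCommGroup E] {f : ℝ → E}
    (hf : Continuous f) (p : ENNReal) (a b : ℝ) : MemLp f p (volume.restrict (Set.Ioc a b)) := by
  obtain ⟨C, hC⟩ := isCompact_Icc.exists_bound_of_continuousOn (s := Set.Icc a b) hf.continuousOn
  refine (memLp_top_of_bound hf.aestronglyMeasurable C ?_).mono_exponent le_top
  exact (ae_restrict_mem measurableSet_Ioc).mono fun x hx => hC x (Set.Ioc_subset_Icc_self hx)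

theorem fCoeff_eq_fourierCoeffOn (f : ℝ → ℂ) (n : ℤ) :
    fCoeff f n = fourierCoeffOn two_pi_pos f n := by
  rw [fourierCoeffOn_eq_integral, fCoeff, sub_zero, Complex.real_smul]
  push_cast
  congr 1
  refine integral_congr fun x _ => ?_
  rw [fourier_coe_apply, smul_eq_mul, mul_comm]
  congr 2
  field_simp
  push_cast
  ring

theorem fCoeff_deriv {u : ℝ → ℂ} (hu : Differentiable ℝ u)
    (hu' : IntervalIntegrable (deriv u) volume 0 (2 * π)) (hper : u (2 * π) = u 0) (n : ℤ) :
    fCoeff (deriv u) n = I * n * fCoeff u n := by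
  rcases eq_or_ne n 0 with rfl | hn
  · rw [fCoeff, integral_congr (g := deriv u) fun x _ => by simp,
      integral_deriv_eq_sub (fun x _ => hu x) hu', hper]
    simp
  · have key := fourierCoeffOn_of_hasDerivAt two_pi_pos hn (fun x _ => (hu x).hasDerivAt) hu'
    rw [← fCoeff_eq_fourierCoeffOn, ← fCoeff_eq_fourierCoeffOn, hper, sub_self, mul_zero,
      zero_sub, Complex.ofReal_zero, sub_zero] at key
    have hn' : (n : ℂ) ≠ 0 := Int.cast_ne_zero.mpr hn
    rw [key]
    field_simp
    push_cast
    ring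

theorem hasSum_conj_fCoeff_mul_fCoeff {f g : ℝ → ℂ} (hf : Continuous f) (hg : Continuous g) :
    HasSum (fun n => conj (fCoeff f n) * fCoeff g n)
      ((2 * π)⁻¹ • ∫ x in (0:ℝ)..(2 * π), conj (f x) * g x) := by
  simpa only [fCoeff_eq_fourierCoeffOn, sub_zero] using
    hasSum_conj_fourierCoeffOn_mul_fourierCoeffOn two_pi_pos
      (hf.memLp_restrict_Ioc 2 0 (2 * π)) (hg.memLp_restrict_Ioc 2 0 (2 * π))

theorem summable_sq_norm_fCoeff {f : ℝ → ℂ} (hf : Continuous f) :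
    Summable fun n => ‖fCoeff f n‖ ^ 2 := by
  simpa only [fCoeff_eq_fourierCoeffOn] using
    (hasSum_sq_fourierCoeffOn two_pi_pos (hf.memLp_restrict_Ioc 2 0 (2 * π))).summable

theorem hasSum_neg_mul_sq_norm_fCoeff {u : ℝ → ℂ} (hu : ContDiff ℝ 1 u) (hper : u (2 * π) = u 0) :
    HasSum (fun n : ℤ => -(n : ℝ) * ‖fCoeff u n‖ ^ 2)
      ((2 * π)⁻¹ * ∫ x in (0:ℝ)..(2 * π), (conj (deriv u x) * u x).im) := by
  have hu' : Continuous (deriv u) := hu.continuous_deriv le_rfl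
  have H := (hasSum_conj_fCoeff_mul_fCoeff hu' hu.continuous).mapL imCLM
  have hint : Continuous fun x => conj (deriv u x) * u x := by fun_prop
  rw [imCLM.map_smul, ← imCLM.intervalIntegral_comp_comm (hint.intervalIntegrable _ _)] at H
  refine H.congr_fun fun n => ?_
  rw [fCoeff_deriv (hu.differentiable one_ne_zero) (hu'.intervalIntegrable _ _) hper]
  simp only [imCLM_apply, map_mul, conj_I, map_intCast, mul_im, mul_re, conj_re, conj_im,
    intCast_re, intCast_im, neg_re, neg_im, I_re, I_im, Complex.sq_norm, normSq_apply]
  ring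

theorem fCoeff_sub {f g : ℝ → ℂ} (hf : IntervalIntegrable f volume 0 (2 * π))
    (hg : IntervalIntegrable g volume 0 (2 * π)) (n : ℤ) :
    fCoeff (f - g) n = fCoeff f n - fCoeff g n := by
  have hexp : ContinuousOn (fun x : ℝ => Complex.exp (-I * n * x)) (Set.uIcc 0 (2 * π)) := by
    fun_prop
  simp only [fCoeff, Pi.sub_apply, sub_mul, ← mul_sub,
    integral_sub (hf.mul_continuousOn hexp) (hg.mul_continuousOn hexp)]

theorem summable_sqrt_one_add_sq_mul_sq_norm_fCoeff {u : ℝ → ℂ} (hu : ContDiff ℝ 1 u)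
    (hper : u (2 * π) = u 0) :
    Summable fun n : ℤ => √(1 + (n : ℝ) ^ 2) * ‖fCoeff u n‖ ^ 2 := by
  have hu' : Continuous (deriv u) := hu.continuous_deriv le_rfl
  have hderiv : ∀ n : ℤ, ‖fCoeff (deriv u) n‖ ^ 2 = (n : ℝ) ^ 2 * ‖fCoeff u n‖ ^ 2 := fun n => by
    rw [fCoeff_deriv (hu.differentiable one_ne_zero) (hu'.intervalIntegrable _ _) hper, norm_mul,
      norm_mul, norm_I, one_mul, norm_intCast, mul_pow, sq_abs]
  refine .of_nonneg_of_le (fun n => by positivity) (fun n => ?_)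
    ((summable_sq_norm_fCoeff hu.continuous).add (summable_sq_norm_fCoeff hu'))
  rw [hderiv, ← one_add_mul]
  exact mul_le_mul_of_nonneg_right (Real.sqrt_le_self_iff.mpr (.inr (by nlinarith)))
    (sq_nonneg _)

/-- Momentum-difference estimate:
`|∫₀^{2π} (Im(ū'u) - Im(v̄'v))| ≤ C(‖u‖_{H^{1/2}} + ‖v‖_{H^{1/2}})‖u-v‖_{H^{1/2}}`. -/
theorem momentum_difference_estimate :
    ∃ C > 0, ∀ u v : ℝ → ℂ, ContDiff ℝ 1 u → ContDiff ℝ 1 v →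
      (∀ x, u (x + 2 * π) = u x) → (∀ x, v (x + 2 * π) = v x) →
      |∫ x in (0:ℝ)..(2 * π),
          (((starRingEnd ℂ) (deriv u x) * u x).im
            - ((starRingEnd ℂ) (deriv v x) * v x).im)| ≤
        C * (Real.sqrt (HhalfSq u) + Real.sqrt (HhalfSq v))
          * Real.sqrt (HhalfSq (u - v)) := by
  refine ⟨2 * π, two_pi_pos, fun u v hu hv hpu hpv => ?_⟩
  have hperu : u (2 * π) = u 0 := by simpa using hpu 0
  have hperv : v (2 * π) = v 0 := by simpa using hpv 0
  have hdensity (w : ℝ → ℂ) (hw : ContDiff ℝ 1 w) :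
      IntervalIntegrable (fun x => (conj (deriv w x) * w x).im) volume 0 (2 * π) :=
    (by fun_prop : Continuous fun x => (conj (deriv w x) * w x).im).intervalIntegrable _ _
  rw [integral_sub (hdensity u hu) (hdensity v hv)]
  have hS := (hasSum_neg_mul_sq_norm_fCoeff hu hperu).sub (hasSum_neg_mul_sq_norm_fCoeff hv hperv)
  simp only [← mul_sub] at hS
  have hbound := abs_le_of_hasSum_mul_sub_sq_norm
    (fun n : ℤ => (abs_neg (n : ℝ)).trans_le (Real.abs_le_sqrt (by linarith)))
    (summable_sqrt_one_add_sq_mul_sq_norm_fCoeff hu hperu)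
    (summable_sqrt_one_add_sq_mul_sq_norm_fCoeff hv hperv) hS
  have hdiff : HhalfSq (u - v) = ∑' n : ℤ, √(1 + (n : ℝ) ^ 2) * ‖fCoeff u n - fCoeff v n‖ ^ 2 := by
    simp only [HhalfSq, fCoeff_sub (hu.continuous.intervalIntegrable _ _)
      (hv.continuous.intervalIntegrable _ _)]
  rw [abs_mul, abs_inv, abs_of_pos two_pi_pos, ← hdiff] at hbound
  calc _ = 2 * π * ((2 * π)⁻¹ * |_|) := by field_simp
    _ ≤ 2 * π * ((√(HhalfSq u) + √(HhalfSq v)) * √(HhalfSq (u - v))) :=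
      mul_le_mul_of_nonneg_left hbound two_pi_pos.le
    _ = _ := by ring
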